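/- arXiv:1906.01854 — 5 statements merged into one kernel-verified Lean document; each statement's English description precedes it below -/
import Mathlib

section
/- If f : H → ℂ is polar-analytic on the whole half-plane H, then the function g : ℂ → ℂ defined by g(x+iy) := f(eˣ, y) is entire (holomorphic on all of ℂ), and for every z₀ = x₀ + i y₀ ∈ ℂ one has g'(z₀) = e^{z₀} · (D_pol f)(e^{x₀}, y₀). -/
open MeasureTheory Filter Complex ENNReal

noncomputable section

/-- The right half-plane `H = {(r,θ) : r > 0}`. -/
def polarHalfPlane : Set (ℝ × ℝ) := {p : ℝ × ℝ | 0 < p.1}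

/-- `f` has polar derivative `L` at `p`, the limit being taken within `D`. -/
def HasPolarDerivAt (f : ℝ × ℝ → ℂ) (D : Set (ℝ × ℝ)) (p : ℝ × ℝ) (L : ℂ) : Prop :=
  Tendsto (fun q : ℝ × ℝ =>
      (f q - f p) /
        ((q.1 : ℂ) * Complex.exp (Complex.I * (q.2 : ℂ)) -
         (p.1 : ℂ) * Complex.exp (Complex.I * (p.2 : ℂ))))
    (nhdsWithin p (D \ {p})) (nhds L)

/-- `f` is polar-analytic on `D`. -/
def PolarAnalyticOn (f : ℝ × ℝ → ℂ) (D : Set (ℝ × ℝ)) : Prop :=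
  ∀ p ∈ D, ∃ L : ℂ, HasPolarDerivAt f D p L

/-- The polar Mellin derivative `Θ_c f = r ∂f/∂r + c f`. -/
def mellinPolarDeriv (c : ℝ) (f : ℝ × ℝ → ℂ) : ℝ × ℝ → ℂ :=
  fun p => (p.1 : ℂ) * deriv (fun r : ℝ => f (r, p.2)) p.1 + (c : ℂ) * f p

/-- The `X_c^p` norm. -/
def XNorm (c : ℝ) (p : ℝ≥0∞) (φ : ℝ → ℂ) : ℝ≥0∞ :=
  if p = ⊤ then ⨆ r : {r : ℝ // 0 < r}, ENNReal.ofReal ((r : ℝ) ^ c * ‖φ r‖)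
  else (∫⁻ r in Set.Ioi (0 : ℝ),
          ENNReal.ofReal ((r ^ c * ‖φ r‖) ^ p.toReal / r)) ^ (1 / p.toReal)

/-- Membership in the Mellin–Bernstein space `B^p_{c,T}`. -/
def MemMellinBernstein (p : ℝ≥0∞) (c T : ℝ) (f : ℝ × ℝ → ℂ) : Prop :=
  PolarAnalyticOn f polarHalfPlane ∧
  XNorm c p (fun r => f (r, 0)) < ⊤ ∧
  ∃ C : ℝ, 0 < C ∧ ∀ r θ : ℝ, 0 < r → r ^ c * ‖f (r, θ)‖ ≤ C * Real.exp (T * |θ|)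

/-- The polar disk `E((r₀,θ₀),ρ)`. -/
def polarDisk (p : ℝ × ℝ) (ρ : ℝ) : Set (ℝ × ℝ) :=
  {q : ℝ × ℝ | 0 < q.1 ∧
    ‖((Real.log (q.1 / p.1) : ℂ) + Complex.I * ((q.2 - p.2 : ℝ) : ℂ))‖ < ρ}

/-- The polar contour integral along the positively oriented boundary of
`[a,b] × [α,β]`:  `∮ g(r,θ) e^{iθ} (dr + i r dθ)`. -/
def rectPolarIntegral (a b α β : ℝ) (g : ℝ × ℝ → ℂ) : ℂ :=
  (∫ r in a..b, g (r, α) * Complex.exp (Complex.I * (α : ℂ))) +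
  (∫ θ in α..β, g (b, θ) * Complex.I * (b : ℂ) * Complex.exp (Complex.I * (θ : ℂ))) -
  (∫ r in a..b, g (r, β) * Complex.exp (Complex.I * (β : ℂ))) -
  (∫ θ in α..β, g (a, θ) * Complex.I * (a : ℂ) * Complex.exp (Complex.I * (θ : ℂ)))

/-- `(r₀,θ₀)` is a logarithmic pole of order `k` of `f`, witnessed by the
neighborhood `U₀` and the polar-analytic function `g`. -/
def IsLogPole (f : ℝ × ℝ → ℂ) (p : ℝ × ℝ) (k : ℕ) (U₀ : Set (ℝ × ℝ))
    (g : ℝ × ℝ → ℂ) : Prop :=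
  IsOpen U₀ ∧ p ∈ U₀ ∧ U₀ ⊆ polarHalfPlane ∧ 1 ≤ k ∧
  PolarAnalyticOn f (U₀ \ {p}) ∧ PolarAnalyticOn g U₀ ∧ g p ≠ 0 ∧
  ∀ q ∈ U₀ \ {p},
    f q = g q / ((Real.log (q.1 / p.1) : ℂ) + Complex.I * ((q.2 - p.2 : ℝ) : ℂ)) ^ k

/-- The `c`-residue of a logarithmic pole of order `k` with witness `g`. -/
def cResidue (c : ℝ) (p : ℝ × ℝ) (k : ℕ) (g : ℝ × ℝ → ℂ) : ℂ :=
  ((p.1 ^ c : ℝ) : ℂ) * Complex.exp (Complex.I * (c : ℂ) * (p.2 : ℂ)) *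
    ((mellinPolarDeriv c)^[k - 1] g p) / ((k - 1).factorial : ℂ)

/-- The central Mellin difference `δ_{c,t} f`. -/
def centralMellinDiff (c t : ℝ) (f : ℝ × ℝ → ℂ) : ℝ × ℝ → ℂ :=
  fun q => ((t ^ c : ℝ) : ℂ) * f (t * q.1, q.2) - ((t ^ (-c) : ℝ) : ℂ) * f (t⁻¹ * q.1, q.2)


lemma key0 (z : ℂ) :
    ((Real.exp z.re : ℝ) : ℂ) * Complex.exp (Complex.I * (z.im : ℂ)) = Complex.exp z := by
  rw [Complex.ofReal_exp, ← Complex.exp_add]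
  congr 1
  rw [mul_comm]
  exact_mod_cast Complex.re_add_im z

lemma aux0 (f : ℝ × ℝ → ℂ) (z₀ L : ℂ)
    (h : HasPolarDerivAt f polarHalfPlane (Real.exp z₀.re, z₀.im) L) :
    HasDerivAt (fun z : ℂ => f (Real.exp z.re, z.im)) (Complex.exp z₀ * L) z₀ := by
  rw [hasDerivAt_iff_tendsto_slope]
  set p : ℝ × ℝ := (Real.exp z₀.re, z₀.im) with hp
  set φ : ℂ → ℝ × ℝ := fun z => (Real.exp z.re, z.im) with hφdef
  have hφcont : Continuous φ := by fun_prop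
  have hφmem : ∀ z : ℂ, z ≠ z₀ → φ z ∈ polarHalfPlane \ {p} := by
    intro z hz
    refine ⟨Real.exp_pos _, ?_⟩
    simp only [Set.mem_singleton_iff, hφdef, hp, Prod.mk.injEq, not_and]
    intro h1 h2
    exact hz (Complex.ext (Real.exp_injective h1) h2)
  have hφ : Tendsto φ (nhdsWithin z₀ {z₀}ᶜ) (nhdsWithin p (polarHalfPlane \ {p})) := by
    apply tendsto_nhdsWithin_of_tendsto_nhds_of_eventually_within
    · exact (hφcont.tendsto z₀).mono_left nhdsWithin_le_nhds
    · exact eventually_nhdsWithin_of_forall (fun z hz => hφmem z hz)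
  have hexp : Tendsto (slope Complex.exp z₀) (nhdsWithin z₀ {z₀}ᶜ) (nhds (Complex.exp z₀)) :=
    hasDerivAt_iff_tendsto_slope.mp (Complex.hasDerivAt_exp z₀)
  have htends := (h.comp hφ).mul hexp
  have hev : ∀ᶠ z in nhdsWithin z₀ {z₀}ᶜ, Complex.exp z ≠ Complex.exp z₀ := by
    filter_upwards [mem_nhdsWithin_of_mem_nhds (Metric.ball_mem_nhds z₀ one_pos),
      self_mem_nhdsWithin] with z hz1 hz2 heq
    obtain ⟨n, hn⟩ := Complex.exp_eq_exp_iff_exists_int.mp heq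
    have hn0 : n ≠ 0 := by
      rintro rfl; simp at hn; exact hz2 hn
    have hsub : z - z₀ = (n : ℂ) * (2 * Real.pi * Complex.I) := by rw [hn]; ring
    rw [Metric.mem_ball, dist_eq_norm, hsub] at hz1
    have h2π : (1:ℝ) ≤ ‖(n : ℂ) * (2 * Real.pi * Complex.I)‖ := by
      have hN : ‖(2 * (Real.pi : ℂ) * Complex.I)‖ = 2 * Real.pi := by
        simp [norm_mul, Complex.norm_real, abs_of_pos Real.pi_pos]
      rw [norm_mul, Complex.norm_intCast, hN]
      have : (1:ℝ) ≤ |(n:ℝ)| := by exact_mod_cast Int.one_le_abs hn0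
      nlinarith [Real.pi_gt_three, abs_nonneg (n:ℝ)]
    linarith
  rw [mul_comm]
  apply htends.congr'
  filter_upwards [hev, self_mem_nhdsWithin] with z hne hz
  have hz' : z ≠ z₀ := hz
  have hd : z - z₀ ≠ 0 := sub_ne_zero.mpr hz'
  have he : Complex.exp z - Complex.exp z₀ ≠ 0 := sub_ne_zero.mpr hne
  simp only [Function.comp, slope_def_field, hφdef, hp]
  rw [key0 z, key0 z₀]
  field_simp

/-- if `f` is polar-analytic on the whole half-plane, then
`g(x+iy) := f(eˣ,y)` is entire, and `g'(z₀) = e^{z₀} · (D_pol f)(e^{x₀}, y₀)`. -/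
theorem statement0 (f : ℝ × ℝ → ℂ) (hf : PolarAnalyticOn f polarHalfPlane) :
    Differentiable ℂ (fun z : ℂ => f (Real.exp z.re, z.im)) ∧
    ∀ (z₀ L : ℂ), HasPolarDerivAt f polarHalfPlane (Real.exp z₀.re, z₀.im) L →
      HasDerivAt (fun z : ℂ => f (Real.exp z.re, z.im)) (Complex.exp z₀ * L) z₀ := by
  constructor
  · intro z
    obtain ⟨L, hL⟩ := hf (Real.exp z.re, z.im) (Real.exp_pos _)
    exact (aux0 f z L hL).differentiableAt
  · exact aux0 f

end
end

section
/- Let f : D → ℂ be polar-analytic on an open set D ⊆ H, let c ∈ ℝ, let (r₀,θ₀) ∈ D, and let ρ > 0 be such that the polar disk E((r₀,θ₀),ρ) is contained in D. Then for every (r,θ) ∈ E((r₀,θ₀),ρ) the series Σ_{k=0}^∞ (Θ_c^k f)(r₀,θ₀)/k! · (log(r/r₀) + i(θ−θ₀))^k converges absolutely and r^c e^{icθ} f(r,θ) = r₀^c e^{icθ₀} Σ_{k=0}^∞ (Θ_c^k f)(r₀,θ₀)/k! · (log(r/r₀) + i(θ−θ₀))^k; moreover the convergence is uniform on E((r₀,θ₀),ρ')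 for every 0 < ρ' < ρ. -/
open MeasureTheory Filter Complex ENNReal

noncomputable section

/-!
Under the chart `z ↦ (e^{Re z}, Im z)` the point `r e^{iθ}` becomes `e^z`, so a polar-analytic
`f` pulls back to a holomorphic function, and `Θ_c` becomes `d/dz` conjugated by `e^{cz}`:
`Θ_c^k f = e^{-cz} G^{(k)}(z)` for `G(z) = e^{cz} f(e^{Re z}, Im z)`. The polar disk is the image
of a Euclidean disk, on which `G` is the sum of its Taylor series, and the Taylor series of a
function holomorphic on a disk converges absolutely and uniformly on smaller disks.
-/

open Topology Metric

def polarExp (z : ℂ) : ℝ × ℝ := (Real.exp z.re, z.im)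

def polarLog (q : ℝ × ℝ) : ℂ := Real.log q.1 + I * q.2

def polarLift (c : ℝ) (f : ℝ × ℝ → ℂ) (z : ℂ) : ℂ := exp (c * z) * f (polarExp z)

lemma continuous_polarExp : Continuous polarExp :=
  (Real.continuous_exp.comp continuous_re).prodMk continuous_im

lemma polarExp_injective : Function.Injective polarExp := fun _ _ h =>
  Complex.ext (Real.exp_injective (congrArg Prod.fst h)) (congrArg Prod.snd h)

lemma polarExp_polarLog {q : ℝ × ℝ} (hq : 0 < q.1) : polarExp (polarLog q) = q := by
  simp [polarExp, polarLog, Real.exp_log hq]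

lemma polarLog_polarExp (z : ℂ) : polarLog (polarExp z) = z := by
  simp [polarExp, polarLog, mul_comm I, re_add_im]

lemma ofReal_mul_exp_polarExp (z : ℂ) :
    ((polarExp z).1 : ℂ) * exp (I * (polarExp z).2) = exp z := by
  rw [polarExp, ofReal_exp, ← exp_add, mul_comm I, re_add_im]

lemma polarLog_sub_polarLog {p q : ℝ × ℝ} (hp : 0 < p.1) (hq : 0 < q.1) :
    polarLog q - polarLog p = (Real.log (q.1 / p.1) : ℂ) + I * ((q.2 - p.2 : ℝ) : ℂ) := by
  rw [Real.log_div hq.ne' hp.ne', polarLog, polarLog]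
  push_cast
  ring

lemma preimage_polarExp_polarDisk {p : ℝ × ℝ} (hp : 0 < p.1) (ρ : ℝ) :
    polarExp ⁻¹' polarDisk p ρ = ball (polarLog p) ρ := by
  ext z
  simp only [Set.mem_preimage, polarDisk, Set.mem_ofPred_eq, mem_ball, dist_eq_norm]
  rw [← polarLog_sub_polarLog hp (Real.exp_pos _), polarLog_polarExp]
  exact and_iff_right (Real.exp_pos _)

lemma polarLift_polarLog (c : ℝ) (f : ℝ × ℝ → ℂ) {p : ℝ × ℝ} (hp : 0 < p.1) :
    polarLift c f (polarLog p) = exp (c * polarLog p) * f p := by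
  rw [polarLift, polarExp_polarLog hp]

lemma ofReal_rpow_mul_exp_eq_exp_polarLog (c : ℝ) {q : ℝ × ℝ} (hq : 0 < q.1) :
    ((q.1 ^ c : ℝ) : ℂ) * exp (I * c * q.2) = exp (c * polarLog q) := by
  rw [Real.rpow_def_of_pos hq, ofReal_exp, ← exp_add, polarLog]
  push_cast
  ring_nf

/-- The polar difference quotient at `polarExp z` times the slope of `exp` at `z` is the slope of
`f ∘ polarExp`; local injectivity of `exp` keeps the quotients defined. -/
lemma HasPolarDerivAt.hasDerivAt_comp_polarExp {f : ℝ × ℝ → ℂ} {D : Set (ℝ × ℝ)} {z L : ℂ}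
    (hL : HasPolarDerivAt f D (polarExp z) L) (hD : D ∈ 𝓝 (polarExp z)) :
    HasDerivAt (fun w => f (polarExp w)) (L * exp z) z := by
  have hmaps : Tendsto polarExp (𝓝[≠] z) (𝓝[D \ {polarExp z}] polarExp z) := by
    refine tendsto_nhdsWithin_of_tendsto_nhds_of_eventually_within _
      (continuous_polarExp.continuousAt.mono_left nhdsWithin_le_nhds) ?_
    filter_upwards [eventually_nhdsWithin_of_eventually_nhds
      (continuous_polarExp.continuousAt.preimage_mem_nhds hD), self_mem_nhdsWithin]
      with w hwD hwz using ⟨hwD, polarExp_injective.ne hwz⟩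
  have hquot : Tendsto (fun w => (f (polarExp w) - f (polarExp z)) / (exp w - exp z))
      (𝓝[≠] z) (𝓝 L) := by
    simpa only [Function.comp_def, ofReal_mul_exp_polarExp] using hL.comp hmaps
  have hexp := hasDerivAt_iff_tendsto_slope.mp (hasDerivAt_exp z)
  refine hasDerivAt_iff_tendsto_slope.mpr ((hquot.mul hexp).congr' ?_)
  filter_upwards [(hasDerivAt_exp z).eventually_ne (exp_ne_zero z)] with w hw
  rw [slope_def_field, slope_def_field, div_mul_div_cancel₀ (sub_ne_zero.mpr hw)]

lemma PolarAnalyticOn.differentiableOn_polarLift {f : ℝ × ℝ → ℂ} {D : Set (ℝ × ℝ)}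
    (hf : PolarAnalyticOn f D) (hD : IsOpen D) (c : ℝ) :
    DifferentiableOn ℂ (polarLift c f) (polarExp ⁻¹' D) := by
  intro z hz
  obtain ⟨L, hL⟩ := hf _ hz
  have hfz := (hL.hasDerivAt_comp_polarExp (hD.mem_nhds hz)).differentiableAt
  exact (((differentiableAt_id.const_mul (c : ℂ)).cexp).mul hfz).differentiableWithinAt

lemma hasDerivAt_polarLog_fst {r : ℝ} (hr : 0 < r) (θ : ℝ) :
    HasDerivAt (fun s : ℝ => polarLog (s, θ)) ((r⁻¹ : ℝ) : ℂ) r := by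
  simp only [polarLog]
  exact (Real.hasDerivAt_log hr.ne').ofReal_comp.add_const _

lemma mellinPolarDeriv_eq_of_eventuallyEq {c : ℝ} {h : ℝ × ℝ → ℂ} {H : ℂ → ℂ} {p : ℝ × ℝ}
    (hp : 0 < p.1) (hH : DifferentiableAt ℂ H (polarLog p))
    (hh : h =ᶠ[𝓝 p] fun q => exp (-(c * polarLog q)) * H (polarLog q)) :
    mellinPolarDeriv c h p = exp (-(c * polarLog p)) * deriv H (polarLog p) := by
  set z := polarLog p
  have hK : HasDerivAt (fun w => exp (-(c * w)) * H w)
      (exp (-(c * z)) * -c * H z + exp (-(c * z)) * deriv H z) z :=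
    (((hasDerivAt_id z).const_mul (c : ℂ)).neg.cexp.congr_deriv (by simp)).mul hH.hasDerivAt
  have hline : (fun r : ℝ => h (r, p.2)) =ᶠ[𝓝 p.1]
      fun r => exp (-(c * polarLog (r, p.2))) * H (polarLog (r, p.2)) :=
    (Continuous.prodMk_left p.2).continuousAt.eventually (p := fun q => h q = _) hh
  have hderiv := (hK.scomp_of_eq p.1 (hasDerivAt_polarLog_fst hp p.2) rfl).congr_of_eventuallyEq
    hline
  rw [mellinPolarDeriv, hderiv.deriv, hh.eq_of_nhds, smul_eq_mul]
  have hp' : (p.1 : ℂ) ≠ 0 := ofReal_ne_zero.mpr hp.ne'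
  push_cast
  field_simp
  ring

lemma PolarAnalyticOn.mellinPolarDeriv_iterate_eq {f : ℝ × ℝ → ℂ} {D : Set (ℝ × ℝ)}
    (hf : PolarAnalyticOn f D) (hD : IsOpen D) (hDH : D ⊆ polarHalfPlane) (c : ℝ) (k : ℕ)
    {p : ℝ × ℝ} (hp : p ∈ D) :
    (mellinPolarDeriv c)^[k] f p =
      exp (-(c * polarLog p)) * iteratedDeriv k (polarLift c f) (polarLog p) := by
  induction k generalizing p with
  | zero =>
    rw [Function.iterate_zero_apply, iteratedDeriv_zero, polarLift_polarLog c f (hDH hp),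
      ← mul_assoc, ← exp_add, neg_add_cancel, exp_zero, one_mul]
  | succ k ih =>
    have hanalytic := (hf.differentiableOn_polarLift hD c).analyticOnNhd
      (hD.preimage continuous_polarExp)
    have hdiff : DifferentiableAt ℂ (iteratedDeriv k (polarLift c f)) (polarLog p) := by
      rw [iteratedDeriv_eq_iterate]
      refine (hanalytic.iterated_deriv k _ ?_).differentiableAt
      rwa [Set.mem_preimage, polarExp_polarLog (hDH hp)]
    rw [Function.iterate_succ_apply', iteratedDeriv_succ]
    exact mellinPolarDeriv_eq_of_eventuallyEq (hDH hp) hdiff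
      (eventually_of_mem (hD.mem_nhds hp) fun q hq => ih hq)

lemma summable_norm_iteratedDeriv_div_factorial_mul_pow {G : ℂ → ℂ} {z₀ : ℂ} {R r : ℝ}
    (hG : DifferentiableOn ℂ G (ball z₀ R)) (hr : 0 ≤ r) (hrR : r < R) :
    Summable fun k => ‖iteratedDeriv k G z₀ / k.factorial‖ * r ^ k := by
  have hmem : z₀ + r ∈ ball z₀ R := by simpa [abs_of_nonneg hr] using hrR
  refine (summable_norm_iff.mpr (hasSum_taylorSeries_on_ball hG hmem).summable).congr fun k => ?_
  simp [abs_of_nonneg hr, div_eq_inv_mul, mul_comm, mul_left_comm]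

lemma tendstoUniformlyOn_sum_range_mul_pow {α : Type*} {a : ℕ → ℂ} {r : ℝ}
    (ha : Summable fun k => ‖a k‖ * r ^ k) {u : α → ℂ} {s : Set α} (hu : ∀ x ∈ s, ‖u x‖ ≤ r) :
    TendstoUniformlyOn (fun n x => ∑ k ∈ Finset.range n, a k * u x ^ k)
      (fun x => ∑' k, a k * u x ^ k) atTop s :=
  tendstoUniformlyOn_tsum_nat ha fun k x hx => by
    rw [norm_mul, norm_pow]
    gcongr
    exact hu x hx

theorem statement1_general (D : Set (ℝ × ℝ)) (hD : IsOpen D) (hDH : D ⊆ polarHalfPlane)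
    (f : ℝ × ℝ → ℂ) (hf : PolarAnalyticOn f D) (c : ℝ)
    (r₀ θ₀ : ℝ) (h₀ : (r₀, θ₀) ∈ D) (ρ : ℝ)
    (hsub : polarDisk (r₀, θ₀) ρ ⊆ D) :
    (∀ q ∈ polarDisk (r₀, θ₀) ρ,
      Summable (fun k : ℕ =>
        ‖((mellinPolarDeriv c)^[k] f (r₀, θ₀)) / (k.factorial : ℂ) *
          ((Real.log (q.1 / r₀) : ℂ) + Complex.I * ((q.2 - θ₀ : ℝ) : ℂ)) ^ k‖) ∧
      ((q.1 ^ c : ℝ) : ℂ) * Complex.exp (Complex.I * (c : ℂ) * (q.2 : ℂ)) * f q =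
        ((r₀ ^ c : ℝ) : ℂ) * Complex.exp (Complex.I * (c : ℂ) * (θ₀ : ℂ)) *
          ∑' k : ℕ, ((mellinPolarDeriv c)^[k] f (r₀, θ₀)) / (k.factorial : ℂ) *
            ((Real.log (q.1 / r₀) : ℂ) + Complex.I * ((q.2 - θ₀ : ℝ) : ℂ)) ^ k) ∧
    ∀ ρ' : ℝ, 0 < ρ' → ρ' < ρ →
      TendstoUniformlyOn
        (fun (n : ℕ) (q : ℝ × ℝ) => ∑ k ∈ Finset.range n,
          ((mellinPolarDeriv c)^[k] f (r₀, θ₀)) / (k.factorial : ℂ) *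
            ((Real.log (q.1 / r₀) : ℂ) + Complex.I * ((q.2 - θ₀ : ℝ) : ℂ)) ^ k)
        (fun q : ℝ × ℝ => ∑' k : ℕ,
          ((mellinPolarDeriv c)^[k] f (r₀, θ₀)) / (k.factorial : ℂ) *
            ((Real.log (q.1 / r₀) : ℂ) + Complex.I * ((q.2 - θ₀ : ℝ) : ℂ)) ^ k)
        atTop (polarDisk (r₀, θ₀) ρ') := by
  have hr₀ : 0 < r₀ := hDH h₀
  set z₀ := polarLog (r₀, θ₀)
  have hG : DifferentiableOn ℂ (polarLift c f) (ball z₀ ρ) := by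
    refine (hf.differentiableOn_polarLift hD c).mono ?_
    rw [← preimage_polarExp_polarDisk hr₀]
    exact Set.preimage_mono hsub
  have hcoef : ∀ k : ℕ, (mellinPolarDeriv c)^[k] f (r₀, θ₀) / k.factorial =
      exp (-(c * z₀)) * (iteratedDeriv k (polarLift c f) z₀ / k.factorial) := fun k => by
    rw [hf.mellinPolarDeriv_iterate_eq hD hDH c k h₀, mul_div_assoc]
  have hbound : ∀ r, 0 ≤ r → r < ρ →
      Summable fun k : ℕ => ‖(mellinPolarDeriv c)^[k] f (r₀, θ₀) / k.factorial‖ * r ^ k :=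
    fun r hr hrρ => by
      simpa only [hcoef, norm_mul, mul_assoc] using
        (summable_norm_iteratedDeriv_div_factorial_mul_pow hG hr hrρ).mul_left ‖exp (-(c * z₀))‖
  refine ⟨fun q hq => ⟨?_, ?_⟩, fun ρ' hρ' hρ'ρ =>
    tendstoUniformlyOn_sum_range_mul_pow (hbound ρ' hρ'.le hρ'ρ) fun q hq => hq.2.le⟩
  · simpa only [norm_mul, norm_pow] using hbound _ (norm_nonneg _) hq.2
  · have hq₁ : 0 < q.1 := hq.1
    have hqz : polarLog q ∈ ball z₀ ρ := by
      rw [← preimage_polarExp_polarDisk hr₀, Set.mem_preimage, polarExp_polarLog hq₁]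
      exact hq
    have hsum : HasSum (fun k : ℕ => (mellinPolarDeriv c)^[k] f (r₀, θ₀) / k.factorial *
        ((Real.log (q.1 / r₀) : ℂ) + I * ((q.2 - θ₀ : ℝ) : ℂ)) ^ k)
        (exp (-(c * z₀)) * polarLift c f (polarLog q)) := by
      have htaylor := (hasSum_taylorSeries_on_ball hG hqz).mul_left (exp (-(c * z₀)))
      rw [polarLog_sub_polarLog hr₀ hq₁] at htaylor
      refine (congrArg (HasSum · _) (funext fun k => ?_)).mpr htaylor
      rw [hcoef, smul_eq_mul, smul_eq_mul]
      ring
    rw [hsum.tsum_eq, ofReal_rpow_mul_exp_eq_exp_polarLog c hq₁,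
      ofReal_rpow_mul_exp_eq_exp_polarLog (q := (r₀, θ₀)) c hr₀, polarLift_polarLog c f hq₁,
      ← mul_assoc, ← exp_add, add_neg_cancel, exp_zero, one_mul]

/-- Taylor-type expansion of a polar-analytic function in a polar disk,
with absolute convergence, and uniform convergence on smaller polar disks. -/
theorem statement1 (D : Set (ℝ × ℝ)) (hD : IsOpen D) (hDH : D ⊆ polarHalfPlane)
    (f : ℝ × ℝ → ℂ) (hf : PolarAnalyticOn f D) (c : ℝ)
    (r₀ θ₀ : ℝ) (h₀ : (r₀, θ₀) ∈ D) (ρ : ℝ) (hρ : 0 < ρ)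
    (hsub : polarDisk (r₀, θ₀) ρ ⊆ D) :
    (∀ q ∈ polarDisk (r₀, θ₀) ρ,
      Summable (fun k : ℕ =>
        ‖((mellinPolarDeriv c)^[k] f (r₀, θ₀)) / (k.factorial : ℂ) *
          ((Real.log (q.1 / r₀) : ℂ) + Complex.I * ((q.2 - θ₀ : ℝ) : ℂ)) ^ k‖) ∧
      ((q.1 ^ c : ℝ) : ℂ) * Complex.exp (Complex.I * (c : ℂ) * (q.2 : ℂ)) * f q =
        ((r₀ ^ c : ℝ) : ℂ) * Complex.exp (Complex.I * (c : ℂ) * (θ₀ : ℂ)) *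
          ∑' k : ℕ, ((mellinPolarDeriv c)^[k] f (r₀, θ₀)) / (k.factorial : ℂ) *
            ((Real.log (q.1 / r₀) : ℂ) + Complex.I * ((q.2 - θ₀ : ℝ) : ℂ)) ^ k) ∧
    ∀ ρ' : ℝ, 0 < ρ' → ρ' < ρ →
      TendstoUniformlyOn
        (fun (n : ℕ) (q : ℝ × ℝ) => ∑ k ∈ Finset.range n,
          ((mellinPolarDeriv c)^[k] f (r₀, θ₀)) / (k.factorial : ℂ) *
            ((Real.log (q.1 / r₀) : ℂ) + Complex.I * ((q.2 - θ₀ : ℝ) : ℂ)) ^ k)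
        (fun q : ℝ × ℝ => ∑' k : ℕ,
          ((mellinPolarDeriv c)^[k] f (r₀, θ₀)) / (k.factorial : ℂ) *
            ((Real.log (q.1 / r₀) : ℂ) + Complex.I * ((q.2 - θ₀ : ℝ) : ℂ)) ^ k)
        atTop (polarDisk (r₀, θ₀) ρ') :=
  statement1_general D hD hDH f hf c r₀ θ₀ h₀ ρ hsub
end
end

section
/- Identity theorem for polar-analytic functions: let D ⊆ H be a nonempty open connected set, let f : D → ℂ be polar-analytic on D, and suppose (r₀,θ₀) ∈ D is an accumulation point of distinct zeros of f, i.e. there exists a sequence (r_n,θ_n) ∈ D of zeros of f with (r_n,θ_n) ≠ (r₀,θ₀) for all n and (r_n,θ_n) → (r₀,θ₀). Then f is identically zero on D. -/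
open MeasureTheory Filter Complex ENNReal

noncomputable section

open Topology

/-! The map `(r, θ) ↦ r e^{iθ}` is a local homeomorphism from the half-plane `H` to `ℂ`, and
polar-analyticity says precisely that `f` read through a local inverse of it is complex
differentiable, hence analytic. So the isolated-zeros principle holds for `f` locally, and the
usual open-closed argument on the connected set `D` spreads the vanishing from `p₀` to all
of `D`. -/

def polarMap (q : ℝ × ℝ) : ℂ := (q.1 : ℂ) * Complex.exp (Complex.I * (q.2 : ℂ))

/-- `Complex.polarCoord.symm` precomposed with `θ ↦ θ - θ₀` and rotated back by `e^{iθ₀}`, so that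
its source is the sector `r > 0, |θ - θ₀| < π`. -/
def polarChart (θ₀ : ℝ) : OpenPartialHomeomorph (ℝ × ℝ) ℂ :=
  ((Homeomorph.addRight ((0 : ℝ), -θ₀)).toOpenPartialHomeomorph.trans
      Complex.polarCoord.symm).trans
    (Homeomorph.mulLeft₀ (Complex.exp (Complex.I * θ₀))
      (Complex.exp_ne_zero _)).toOpenPartialHomeomorph

theorem polarChart_apply (θ₀ : ℝ) (q : ℝ × ℝ) : polarChart θ₀ q = polarMap q := by
  simp only [polarChart, polarMap, OpenPartialHomeomorph.coe_trans, Function.comp_apply,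
    Homeomorph.toOpenPartialHomeomorph_apply, Homeomorph.coe_mulLeft₀, Homeomorph.coe_addRight,
    Complex.polarCoord_symm_apply, Prod.fst_add, Prod.snd_add]
  push_cast
  rw [← Complex.exp_mul_I, add_zero, mul_left_comm, ← Complex.exp_add]
  ring_nf

theorem mem_polarChart_source {q : ℝ × ℝ} (hq : 0 < q.1) : q ∈ (polarChart q.2).source := by
  simp [polarChart, Complex.polarCoord_target, hq, Real.pi_pos]

theorem HasPolarDerivAt.hasDerivAt_comp_polarChart_symm {f : ℝ × ℝ → ℂ} {D : Set (ℝ × ℝ)} {L w : ℂ}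
    {θ₀ : ℝ} (hD : IsOpen D) (hw : w ∈ (polarChart θ₀).target) (hwD : (polarChart θ₀).symm w ∈ D)
    (hf : HasPolarDerivAt f D ((polarChart θ₀).symm w) L) :
    HasDerivAt (f ∘ (polarChart θ₀).symm) L w := by
  set e := polarChart θ₀
  have hsymm : Tendsto e.symm (𝓝[≠] w) (𝓝[D \ {e.symm w}] (e.symm w)) := by
    refine tendsto_nhdsWithin_iff.2 ⟨(e.continuousAt_symm hw).mono_left nhdsWithin_le_nhds, ?_⟩
    filter_upwards [nhdsWithin_le_nhds
        ((e.continuousAt_symm hw).preimage_mem_nhds (hD.mem_nhds hwD)),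
      e.symm.eventually_ne_nhdsWithin hw] with y hyD hyne
    exact ⟨hyD, hyne⟩
  rw [hasDerivAt_iff_tendsto_slope]
  refine (hf.comp hsymm).congr' ?_
  -- on the target `e (e.symm y) = y`, so the slope is the polar difference quotient at `e.symm y`
  filter_upwards [nhdsWithin_le_nhds (e.eventually_right_inverse hw)] with y hy
  change (f (e.symm y) - f (e.symm w)) / (polarMap (e.symm y) - polarMap (e.symm w)) = _
  rw [← polarChart_apply, ← polarChart_apply, hy, e.right_inv hw, slope_def_field]
  rfl

theorem PolarAnalyticOn.eventually_eq_zero_of_frequently_eq_zero {f : ℝ × ℝ → ℂ}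
    {D : Set (ℝ × ℝ)} {q : ℝ × ℝ} (hf : PolarAnalyticOn f D) (hD : IsOpen D) (hq : q ∈ D)
    (hq₁ : 0 < q.1) (hzero : ∃ᶠ x in 𝓝[≠] q, f x = 0) : ∀ᶠ x in 𝓝 q, f x = 0 := by
  set e := polarChart q.2
  have hqe : q ∈ e.source := mem_polarChart_source hq₁
  have hanalytic : AnalyticAt ℂ (f ∘ e.symm) (e q) := by
    have hU : e.target ∩ e.symm ⁻¹' D ∈ 𝓝 (e q) :=
      (e.isOpen_inter_preimage_symm hD).mem_nhds
        ⟨e.map_source hqe, by rw [Set.mem_preimage, e.left_inv hqe]; exact hq⟩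
    refine DifferentiableOn.analyticAt (fun w hw => ?_) hU
    obtain ⟨L, hL⟩ := hf _ hw.2
    exact (hL.hasDerivAt_comp_polarChart_symm hD hw.1 hw.2).differentiableAt.differentiableWithinAt
  have hfreq : ∃ᶠ w in 𝓝[≠] (e q), (f ∘ e.symm) w = 0 := by
    have he : Tendsto e (𝓝[≠] q) (𝓝[≠] (e q)) := tendsto_nhdsWithin_iff.2
      ⟨(e.continuousAt hqe).mono_left nhdsWithin_le_nhds, e.eventually_ne_nhdsWithin hqe⟩
    refine he.frequently ((hzero.and_eventually
      (nhdsWithin_le_nhds (e.eventually_left_inverse hqe))).mono ?_)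
    rintro x ⟨hx, hinv⟩
    rwa [Function.comp_apply, hinv]
  exact (e.eventually_nhds' (fun x => f x = 0) hqe).1
    (hanalytic.frequently_zero_iff_eventually_zero.1 hfreq)

theorem PolarAnalyticOn.eqOn_zero_of_preconnected_of_frequently_eq_zero {f : ℝ × ℝ → ℂ}
    {D : Set (ℝ × ℝ)} {p₀ : ℝ × ℝ} (hf : PolarAnalyticOn f D) (hD : IsOpen D)
    (hDH : D ⊆ polarHalfPlane) (hconn : IsPreconnected D) (hp₀ : p₀ ∈ D)
    (hzero : ∃ᶠ x in 𝓝[≠] p₀, f x = 0) : Set.EqOn f 0 D := by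
  have hlocal : ∀ q ∈ D, (∃ᶠ x in 𝓝[≠] q, f x = 0) → ∀ᶠ x in 𝓝 q, f x = 0 :=
    fun q hq => hf.eventually_eq_zero_of_frequently_eq_zero hD hq (hDH hq)
  set Z := {q | ∀ᶠ x in 𝓝 q, f x = 0}
  have hDZ : D ⊆ Z := by
    refine hconn.subset_of_closure_inter_subset isOpen_setOfPred_eventually_nhds
      ⟨p₀, hp₀, hlocal p₀ hp₀ hzero⟩ ?_
    rintro q ⟨hqZ, hqD⟩
    by_contra hq
    refine hq (hlocal q hqD ?_)
    have : ∃ᶠ x in 𝓝[≠] q, x ∈ Z :=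
      mem_closure_ne_iff_frequently_within.1 (by rwa [Set.sdiff_singleton_eq_self hq])
    exact this.mono fun x hx => hx.self_of_nhds
  exact fun q hq => (hDZ hq).self_of_nhds

theorem statement3_general (D : Set (ℝ × ℝ)) (hD : IsOpen D) (hDH : D ⊆ polarHalfPlane)
    (hconn : IsConnected D) (f : ℝ × ℝ → ℂ) (hf : PolarAnalyticOn f D)
    (p₀ : ℝ × ℝ) (hp₀ : p₀ ∈ D) (z : ℕ → ℝ × ℝ)
    (hzero : ∀ n, f (z n) = 0) (hne : ∀ n, z n ≠ p₀)
    (hlim : Tendsto z atTop (nhds p₀)) :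
    ∀ q ∈ D, f q = 0 := by
  have hz : Tendsto z atTop (𝓝[≠] p₀) :=
    tendsto_nhdsWithin_iff.2 ⟨hlim, Eventually.of_forall hne⟩
  exact hf.eqOn_zero_of_preconnected_of_frequently_eq_zero hD hDH hconn.isPreconnected hp₀
    (hz.frequently (Frequently.of_forall hzero))

/-- identity theorem for polar-analytic functions: a polar-analytic
function on a domain with an accumulation point of distinct zeros vanishes identically. -/
theorem statement3 (D : Set (ℝ × ℝ)) (hD : IsOpen D) (hDH : D ⊆ polarHalfPlane)
    (hconn : IsConnected D) (f : ℝ × ℝ → ℂ) (hf : PolarAnalyticOn f D)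
    (p₀ : ℝ × ℝ) (hp₀ : p₀ ∈ D) (z : ℕ → ℝ × ℝ) (hzD : ∀ n, z n ∈ D)
    (hzero : ∀ n, f (z n) = 0) (hne : ∀ n, z n ≠ p₀)
    (hlim : Tendsto z atTop (nhds p₀)) :
    ∀ q ∈ D, f q = 0 :=
  statement3_general D hD hDH hconn f hf p₀ hp₀ z hzero hne hlim

end
end

section
/- Identity theorem in B^∞_{c,T}: let f ∈ B^∞_{c,T} with c ∈ ℝ, T > 0. If f(e^{kπ/T}, 0) = 0 for every k ∈ ℤ, then there exists a ∈ ℂ such that f(r,θ) = a · r^{−c} e^{−icθ} · sin(T(log r + iθ)) for all (r,θ) ∈ H. -/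
/-!
In the variable `z = log r + iθ`, the function `G z = e^{cz} f(e^{Re z}, Im z)` is entire (a polar
difference quotient of `f` is a difference quotient of `f ∘ expPolar` divided by one of `exp`),
satisfies `|G z| ≤ C e^{T |Im z|}` and vanishes at the points `kπ/T`. After rescaling to `T = 1`,
`G / sin` extends to an entire function, which is bounded: for `|Im z| ≥ 1` since
`|sin z| ≥ sinh |Im z|`, and in the strip `|Im z| < 1` since the Schwarz lemma at the nearest zero
`kπ` bounds `G z / (z - kπ)` while Jordan's inequality gives `|sin z| ≥ (2/π) |z - kπ|`.
By Liouville's theorem, `G = a sin`.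
-/

open MeasureTheory Filter Complex ENNReal

noncomputable section

open Metric Set Topology
open scoped Real

namespace Complex

lemma norm_sin_sq (z : ℂ) : ‖sin z‖ ^ 2 = Real.sin z.re ^ 2 + Real.sinh z.im ^ 2 := by
  rw [sin_eq, ← ofReal_sin, ← ofReal_cos, ← ofReal_cosh, ← ofReal_sinh, ← ofReal_mul,
    ← ofReal_mul, Complex.sq_norm, normSq_add_mul_I]
  nlinarith [Real.sin_sq_add_cos_sq z.re, Real.cosh_sq z.im]

lemma sinh_abs_im_le_norm_sin (z : ℂ) : Real.sinh |z.im| ≤ ‖sin z‖ := by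
  refine abs_le_of_sq_le_sq' ?_ (norm_nonneg _) |>.2
  rw [norm_sin_sq, ← Real.abs_sinh, sq_abs]
  nlinarith [sq_nonneg (Real.sin z.re)]

lemma norm_le_pi_div_two_mul_norm_sin {z : ℂ} (hz : |z.re| ≤ π / 2) :
    ‖z‖ ≤ π / 2 * ‖sin z‖ := by
  have hre : |z.re| ≤ π / 2 * |Real.sin z.re| := calc
    |z.re| = π / 2 * (2 / π * |z.re|) := by field_simp
    _ ≤ π / 2 * |Real.sin z.re| := by gcongr; exact Real.mul_abs_le_abs_sin hz
  have him : |z.im| ≤ π / 2 * |Real.sinh z.im| := calc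
    |z.im| ≤ |Real.sinh z.im| := by
      rw [Real.abs_sinh]; exact Real.self_le_sinh_iff.2 (abs_nonneg _)
    _ ≤ π / 2 * |Real.sinh z.im| :=
      le_mul_of_one_le_left (abs_nonneg _) (by linarith [Real.pi_gt_three])
  refine abs_le_of_sq_le_sq' ?_ (by positivity) |>.2
  rw [mul_pow, norm_sin_sq, Complex.sq_norm, normSq_apply, ← sq_abs (Real.sin _),
    ← sq_abs (Real.sinh _)]
  nlinarith [mul_le_mul hre hre (abs_nonneg _) (by positivity),
    mul_le_mul him him (abs_nonneg _) (by positivity), abs_mul_abs_self z.re,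
    abs_mul_abs_self z.im]

lemma norm_cos_int_mul_pi (k : ℤ) : ‖cos (k * π)‖ = 1 := by
  rw [← ofReal_intCast, ← ofReal_mul, ← ofReal_cos, norm_real, Real.norm_eq_abs,
    Real.abs_cos_int_mul_pi]

lemma norm_sin_add_int_mul_pi (z : ℂ) (k : ℤ) : ‖sin (z + k * π)‖ = ‖sin z‖ := by
  rw [sin_add, sin_int_mul_pi, mul_zero, add_zero, norm_mul, norm_cos_int_mul_pi, mul_one]

lemma two_div_pi_le_norm_dslope_sin {k : ℤ} {z : ℂ} (hz : |(z - k * π).re| ≤ π / 2) :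
    2 / π ≤ ‖dslope sin (k * π) z‖ := by
  rcases eq_or_ne z (k * π) with rfl | hne
  · rw [dslope_same, deriv_sin, norm_cos_int_mul_pi, div_le_one Real.pi_pos]
    linarith [Real.pi_gt_three]
  · have hw : z - k * π ≠ 0 := sub_ne_zero.2 hne
    have hsin : ‖sin z‖ = ‖sin (z - k * π)‖ := by
      rw [← norm_sin_add_int_mul_pi (z - k * π) k, sub_add_cancel]
    rw [dslope_of_ne _ hne, slope_def_field, sin_int_mul_pi, sub_zero, norm_div, hsin,
      le_div_iff₀ (norm_pos_iff.2 hw)]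
    have := norm_le_pi_div_two_mul_norm_sin hz
    rw [div_mul_eq_mul_div, div_le_iff₀ Real.pi_pos]
    linarith

lemma sin_ne_zero_of_mem_ball {k : ℤ} {z : ℂ} (hz : z ∈ ball (k * π : ℂ) π)
    (hne : z ≠ k * π) : sin z ≠ 0 := by
  intro h
  obtain ⟨m, rfl⟩ := sin_eq_zero_iff.1 h
  have hmk : m ≠ k := by rintro rfl; exact hne rfl
  rw [mem_ball, dist_eq_norm, ← sub_mul, ← Int.cast_sub, norm_mul, norm_real, Real.norm_eq_abs,
    abs_of_pos Real.pi_pos, norm_intCast] at hz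
  have : (1 : ℝ) ≤ |((m - k : ℤ) : ℝ)| := by
    rw [← Int.cast_abs]; exact_mod_cast Int.one_le_abs (sub_ne_zero.2 hmk)
  nlinarith [Real.pi_pos]

end Complex

/-- `G z / sin z`, continued to the zeros of `sin` by l'Hôpital's value `G' z / cos z`. -/
def divSin (G : ℂ → ℂ) (z : ℂ) : ℂ :=
  if sin z = 0 then deriv G z / cos z else G z / sin z

section divSin

variable {G : ℂ → ℂ}

lemma divSin_eq_dslope_div_dslope (hzero : ∀ k : ℤ, G (k * π) = 0) {k : ℤ} {z : ℂ}
    (hz : z ∈ ball (k * π : ℂ) π) : divSin G z = dslope G (k * π) z / dslope sin (k * π) z := by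
  rcases eq_or_ne z (k * π) with rfl | hne
  · rw [divSin, if_pos (sin_int_mul_pi k), dslope_same, dslope_same, Complex.deriv_sin]
  · rw [divSin, if_neg (sin_ne_zero_of_mem_ball hz hne), dslope_of_ne _ hne, dslope_of_ne _ hne,
      slope_def_field, slope_def_field, hzero, sin_int_mul_pi, sub_zero, sub_zero,
      div_div_div_cancel_right₀ (sub_ne_zero.2 hne)]

lemma differentiable_divSin (hG : Differentiable ℂ G) (hzero : ∀ k : ℤ, G (k * π) = 0) :
    Differentiable ℂ (divSin G) := by
  intro z
  by_cases h : sin z = 0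
  · obtain ⟨k, rfl⟩ := sin_eq_zero_iff.1 h
    have hdslope : ∀ F : ℂ → ℂ, Differentiable ℂ F →
        DifferentiableAt ℂ (dslope F (k * π)) (k * π) := fun F hF =>
      ((differentiableOn_dslope univ_mem).2 hF.differentiableOn).differentiableAt univ_mem
    have hcos : dslope sin (k * π : ℂ) (k * π) ≠ 0 := by
      rw [dslope_same, Complex.deriv_sin, ← norm_ne_zero_iff, norm_cos_int_mul_pi]
      exact one_ne_zero
    refine ((hdslope G hG).div (hdslope sin differentiable_sin) hcos).congr_of_eventuallyEq ?_
    filter_upwards [ball_mem_nhds _ Real.pi_pos] with w hw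
    exact divSin_eq_dslope_div_dslope hzero hw
  · refine ((hG z).div (differentiable_sin z) h).congr_of_eventuallyEq ?_
    filter_upwards [continuous_sin.continuousAt.eventually_ne h] with w hw
    rw [divSin, if_neg hw, Pi.div_apply]

variable {C : ℝ}

lemma norm_divSin_le_of_one_le_abs_im (hC₀ : 0 ≤ C) (hC : ∀ z, ‖G z‖ ≤ C * Real.exp |z.im|)
    {z : ℂ} (hz : 1 ≤ |z.im|) : ‖divSin G z‖ ≤ 2 * C / (1 - Real.exp (-2)) := by
  have hq : 0 < 1 - Real.exp (-2) := sub_pos.2 (Real.exp_lt_one_iff.2 (by norm_num))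
  have hsinh : (1 - Real.exp (-2)) / 2 * Real.exp |z.im| ≤ ‖sin z‖ := by
    refine le_trans ?_ (sinh_abs_im_le_norm_sin z)
    have : Real.exp (-|z.im|) ≤ Real.exp (-2) * Real.exp |z.im| := by
      rw [← Real.exp_add]; exact Real.exp_le_exp.2 (by linarith)
    rw [Real.sinh_eq]
    linarith
  have hsin : 0 < ‖sin z‖ := lt_of_lt_of_le (by positivity) hsinh
  rw [divSin, if_neg (norm_pos_iff.1 hsin), norm_div, div_le_iff₀ hsin]
  calc ‖G z‖ ≤ C * Real.exp |z.im| := hC z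
    _ = 2 * C / (1 - Real.exp (-2)) * ((1 - Real.exp (-2)) / 2 * Real.exp |z.im|) := by
      field_simp
    _ ≤ 2 * C / (1 - Real.exp (-2)) * ‖sin z‖ := by gcongr

lemma norm_divSin_le_of_abs_im_lt_one (hG : Differentiable ℂ G)
    (hzero : ∀ k : ℤ, G (k * π) = 0) (hC₀ : 0 ≤ C) (hC : ∀ z, ‖G z‖ ≤ C * Real.exp |z.im|)
    {z : ℂ} (hz : |z.im| < 1) : ‖divSin G z‖ ≤ C * Real.exp π / 2 := by
  set k := round (z.re / π)
  have hre : |(z - k * π).re| ≤ π / 2 := by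
    have hround := abs_sub_round (z.re / π)
    have : (z - k * π).re = π * (z.re / π - k) := by
      simp only [sub_re, mul_re, intCast_re, ofReal_re, intCast_im, ofReal_im, mul_zero, sub_zero]
      field_simp
    rw [this, abs_mul, abs_of_pos Real.pi_pos]
    nlinarith [Real.pi_pos]
  have hball : z ∈ ball (k * π : ℂ) π := by
    rw [mem_ball, dist_eq_norm]
    have him : (z - k * π).im = z.im := by simp
    have := norm_le_abs_re_add_abs_im (z - k * π)
    rw [him] at this
    linarith [Real.pi_gt_three]
  have hmaps : MapsTo G (ball (k * π : ℂ) π) (closedBall (G (k * π)) (C * Real.exp π)) := by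
    intro u hu
    rw [mem_closedBall, hzero, dist_zero_right]
    rw [mem_ball, dist_eq_norm] at hu
    have : |u.im| ≤ ‖u - k * π‖ := by simpa using abs_im_le_norm (u - k * π)
    calc ‖G u‖ ≤ C * Real.exp |u.im| := hC u
      _ ≤ C * Real.exp π := by gcongr; linarith
  have hnum : ‖dslope G (k * π) z‖ ≤ C * Real.exp π / π :=
    norm_dslope_le_div_of_mapsTo_ball hG.differentiableOn hmaps hball
  have hden := two_div_pi_le_norm_dslope_sin hre
  rw [divSin_eq_dslope_div_dslope hzero hball, norm_div]
  calc ‖dslope G (k * π) z‖ / ‖dslope sin (k * π : ℂ) z‖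
      ≤ (C * Real.exp π / π) / (2 / π) := div_le_div₀ (by positivity) hnum (by positivity) hden
    _ = C * Real.exp π / 2 := by field_simp

lemma isBounded_range_divSin (hG : Differentiable ℂ G) (hzero : ∀ k : ℤ, G (k * π) = 0)
    (hC₀ : 0 ≤ C) (hC : ∀ z, ‖G z‖ ≤ C * Real.exp |z.im|) :
    Bornology.IsBounded (range (divSin G)) := by
  refine isBounded_iff_forall_norm_le.2
    ⟨max (2 * C / (1 - Real.exp (-2))) (C * Real.exp π / 2), ?_⟩
  rintro _ ⟨z, rfl⟩
  rcases le_or_gt 1 |z.im| with hz | hz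
  · exact (norm_divSin_le_of_one_le_abs_im hC₀ hC hz).trans (le_max_left _ _)
  · exact (norm_divSin_le_of_abs_im_lt_one hG hzero hC₀ hC hz).trans (le_max_right _ _)

end divSin

theorem exists_eq_mul_sin_of_norm_le_mul_exp {G : ℂ → ℂ} {C : ℝ} (hG : Differentiable ℂ G)
    (hC₀ : 0 ≤ C) (hC : ∀ z, ‖G z‖ ≤ C * Real.exp |z.im|) (hzero : ∀ k : ℤ, G (k * π) = 0) :
    ∃ a : ℂ, ∀ z, G z = a * sin z := by
  have hconst := (differentiable_divSin hG hzero).apply_eq_apply_of_bounded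
    (isBounded_range_divSin hG hzero hC₀ hC)
  refine ⟨divSin G 0, fun z => ?_⟩
  by_cases h : sin z = 0
  · obtain ⟨k, rfl⟩ := sin_eq_zero_iff.1 h
    rw [hzero, h, mul_zero]
  · rw [← hconst z, divSin, if_neg h, div_mul_cancel₀ _ h]

theorem exists_eq_mul_sin_mul_of_norm_le_mul_exp {G : ℂ → ℂ} {C T : ℝ} (hT : 0 < T)
    (hG : Differentiable ℂ G) (hC₀ : 0 ≤ C) (hC : ∀ z, ‖G z‖ ≤ C * Real.exp (T * |z.im|))
    (hzero : ∀ k : ℤ, G (k * π / T) = 0) : ∃ a : ℂ, ∀ z, G z = a * sin (T * z) := by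
  have hT' : (T : ℂ) ≠ 0 := ofReal_ne_zero.2 hT.ne'
  obtain ⟨a, ha⟩ := exists_eq_mul_sin_of_norm_le_mul_exp (G := fun z => G (z / T))
    (hG.comp (differentiable_id.div_const _)) hC₀
    (fun z => by simpa [abs_div, abs_of_pos hT, mul_div_cancel₀ _ hT.ne'] using hC (z / T)) hzero
  exact ⟨a, fun z => by simpa [mul_div_cancel_left₀ _ hT'] using ha (T * z)⟩

/-- The polar coordinates `(r, θ) = (e^{Re z}, Im z)` of `e^z`. -/
def expPolar (z : ℂ) : ℝ × ℝ := (Real.exp z.re, z.im)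

lemma expPolar_injective : Function.Injective expPolar := fun z w h => by
  simp only [expPolar, Prod.mk.injEq, Real.exp_eq_exp] at h
  exact Complex.ext h.1 h.2

lemma continuous_expPolar : Continuous expPolar := by unfold expPolar; fun_prop

lemma ofReal_expPolar_fst_mul_exp (z : ℂ) :
    ((expPolar z).1 : ℂ) * exp (I * (expPolar z).2) = exp z := by
  rw [expPolar, ofReal_exp, ← exp_add, mul_comm, re_add_im]

lemma expPolar_log_add_mul_I {r : ℝ} (hr : 0 < r) (θ : ℝ) :
    expPolar (Real.log r + I * θ) = (r, θ) := by
  simp [expPolar, Real.exp_log hr]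

lemma HasPolarDerivAt.hasDerivWithinAt_comp_expPolar {f : ℝ × ℝ → ℂ} {D : Set (ℝ × ℝ)} {z : ℂ}
    {L : ℂ} (h : HasPolarDerivAt f D (expPolar z) L) :
    HasDerivWithinAt (f ∘ expPolar) (L * exp z) (expPolar ⁻¹' D) z := by
  have hΦ : Tendsto expPolar (𝓝[expPolar ⁻¹' D \ {z}] z) (𝓝[D \ {expPolar z}] expPolar z) := by
    refine tendsto_nhdsWithin_iff.2 ⟨continuous_expPolar.continuousAt.mono_left
      nhdsWithin_le_nhds, ?_⟩
    filter_upwards [self_mem_nhdsWithin] with w ⟨hwD, hwz⟩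
    exact ⟨hwD, expPolar_injective.ne hwz⟩
  have hexp : HasDerivWithinAt exp (exp z) (expPolar ⁻¹' D) z :=
    (hasDerivAt_exp z).hasDerivWithinAt
  rw [hasDerivWithinAt_iff_tendsto_slope] at hexp ⊢
  refine ((h.comp hΦ).mul hexp).congr' ?_
  filter_upwards [self_mem_nhdsWithin, hexp.eventually_ne (exp_ne_zero z)] with w hwz hw
  rw [slope_def_field] at hw
  rw [slope_def_field, slope_def_field]
  simp only [Function.comp_apply, ofReal_expPolar_fst_mul_exp]
  exact div_mul_div_cancel₀ (div_ne_zero_iff.1 hw).1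

lemma PolarAnalyticOn.differentiable_comp_expPolar {f : ℝ × ℝ → ℂ}
    (hf : PolarAnalyticOn f polarHalfPlane) : Differentiable ℂ (f ∘ expPolar) := fun z => by
  obtain ⟨L, hL⟩ := hf (expPolar z) (Real.exp_pos z.re)
  have : expPolar ⁻¹' polarHalfPlane = univ := eq_univ_of_forall fun w => Real.exp_pos w.re
  exact differentiableWithinAt_univ.1
    (this ▸ hL.hasDerivWithinAt_comp_expPolar.differentiableWithinAt)

lemma norm_cexp_ofReal_mul (c : ℝ) (z : ℂ) : ‖exp (c * z)‖ = (expPolar z).1 ^ c := by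
  rw [norm_exp, re_ofReal_mul, expPolar, ← Real.exp_mul, mul_comm]

lemma cexp_neg_ofReal_mul_log_add_mul_I {r : ℝ} (hr : 0 < r) (c θ : ℝ) :
    exp (-(c * (Real.log r + I * θ))) = ((r ^ (-c) : ℝ) : ℂ) * exp (-(I * c * θ)) := by
  rw [Real.rpow_def_of_pos hr, ofReal_exp, ← exp_add]
  push_cast
  ring_nf

/-- identity theorem in `B^∞_{c,T}`: a function vanishing at the
sample points `e^{kπ/T}` is a multiple of `(re^{iθ})^{-c} sin(T(log r + iθ))`. -/
theorem statement15 (c T : ℝ) (hT : 0 < T)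
    (f : ℝ × ℝ → ℂ) (hf : MemMellinBernstein ⊤ c T f)
    (hzero : ∀ k : ℤ, f (Real.exp ((k : ℝ) * Real.pi / T), 0) = 0) :
    ∃ a : ℂ, ∀ r θ : ℝ, 0 < r →
      f (r, θ) = a * ((r ^ (-c) : ℝ) : ℂ) * Complex.exp (-(Complex.I * (c : ℂ) * (θ : ℂ))) *
        Complex.sin ((T : ℂ) * ((Real.log r : ℂ) + Complex.I * (θ : ℂ))) := by
  obtain ⟨hpolar, -, C, hC₀, hC⟩ := hf
  set G : ℂ → ℂ := fun z => exp (c * z) * f (expPolar z)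
  have hG : Differentiable ℂ G :=
    ((differentiable_id.const_mul _).cexp).mul hpolar.differentiable_comp_expPolar
  have hGC : ∀ z, ‖G z‖ ≤ C * Real.exp (T * |z.im|) := fun z => by
    rw [norm_mul, norm_cexp_ofReal_mul]
    exact hC _ _ (Real.exp_pos _)
  have hGzero : ∀ k : ℤ, G (k * π / T) = 0 := fun k => by
    have hreal : (k * π / T : ℂ) = ((k * π / T : ℝ) : ℂ) := by push_cast; rfl
    simp only [G, hreal, expPolar, ofReal_re, ofReal_im, hzero, mul_zero]
  obtain ⟨a, ha⟩ := exists_eq_mul_sin_mul_of_norm_le_mul_exp hT hG hC₀.le hGC hGzero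
  refine ⟨a, fun r θ hr => ?_⟩
  have hfG : f (r, θ) = exp (-(c * (Real.log r + I * θ))) * G (Real.log r + I * θ) := by
    simp only [G, expPolar_log_add_mul_I hr, ← mul_assoc, ← exp_add, neg_add_cancel, exp_zero,
      one_mul]
  rw [hfG, ha, cexp_neg_ofReal_mul_log_add_mul_I hr]
  ring

end
end

section
/- Uniqueness from samples in B^p_{c,T}: let f ∈ B^p_{c,T} with c ∈ ℝ, T > 0 and p ∈ [1,∞). If f(e^{kπ/T}, 0) = 0 for every k ∈ ℤ, then f is identically zero on H. -/
open MeasureTheory Filter Complex ENNReal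

noncomputable section

/-!
In the coordinate `z = log r + iθ`, polar analyticity of `f` is complex differentiability of
`F z = f (e^{Re z}, Im z)`, and `G z = e^{cz} F z` is an entire function with
`‖G z‖ ≤ C e^{T |Im z|}` vanishing on `(π / T)ℤ`. Hence `G z / sin (T z)` is entire, and it is
bounded: away from the zeros `‖sin w‖ ≥ e^{|Im w|} / 3`, and near them the maximum principle
applies. By Liouville `G = a sin (T ·)`, so `r^c ‖f (r, 0)‖ = ‖a‖ |sin (T log r)|`. After the
substitution `r = e^t` the `X_c^p` norm of this is the integral over `ℝ` of a periodic function,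
which is infinite unless `a = 0`.
-/

open scoped Real Topology

theorem Complex.norm_sin_sq_s16 (w : ℂ) :
    ‖sin w‖ ^ 2 = Real.sin w.re ^ 2 + Real.sinh w.im ^ 2 := by
  have hw : sin w = ((Real.sin w.re * Real.cosh w.im : ℝ) : ℂ) +
      ((Real.cos w.re * Real.sinh w.im : ℝ) : ℂ) * I := by
    conv_lhs => rw [← re_add_im w]
    rw [sin_add, sin_mul_I, cos_mul_I]
    push_cast
    ring
  rw [hw, Complex.sq_norm, normSq_add_mul_I]
  nlinarith [Real.cosh_sq w.im, Real.sin_sq_add_cos_sq w.re]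

theorem Complex.one_le_norm_sin {w : ℂ} (hw : ∀ k : ℤ, π / 2 ≤ ‖w - k * π‖) :
    1 ≤ ‖sin w‖ := by
  set k : ℤ := round (w.re / π)
  set x : ℝ := w.re - k * π
  have hx : |x| ≤ π / 2 := by
    have hxe : x = (w.re / π - k) * π := by field_simp; ring
    rw [hxe, abs_mul, abs_of_pos Real.pi_pos]
    nlinarith [abs_sub_round (w.re / π), Real.pi_pos]
  have hdist : (π / 2) ^ 2 ≤ x ^ 2 + w.im ^ 2 := by
    have h : ‖w - k * π‖ ^ 2 = x ^ 2 + w.im ^ 2 := by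
      rw [Complex.sq_norm, normSq_apply]
      simp [x]
      ring
    rw [← h]
    exact pow_le_pow_left₀ (by positivity) (hw k) 2
  have hsin_re : Real.sin w.re ^ 2 = Real.sin |x| ^ 2 := by
    have hre : w.re = x + k * π := by ring
    rw [hre, Real.sin_add_int_mul_pi]
    have hsign : ((-1 : ℝ) ^ k) ^ 2 = 1 := by
      rw [← zpow_natCast, ← zpow_mul, mul_comm, zpow_mul]; simp
    rcases abs_choice x with h | h <;> rw [h, mul_pow, hsign] <;> simp
  -- Jordan's inequality on the real part, `t ≤ sinh t` on the imaginary part.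
  have hjordan : 2 / π * |x| ≤ Real.sin |x| := Real.mul_le_sin (abs_nonneg x) hx
  have hsinh : |w.im| ≤ Real.sinh |w.im| := Real.self_le_sinh_iff.mpr (abs_nonneg _)
  have hsq : 1 ≤ ‖sin w‖ ^ 2 := by
    rw [norm_sin_sq_s16, hsin_re, ← sq_abs (Real.sinh w.im), Real.abs_sinh]
    have h1 : (2 / π) ^ 2 * (x ^ 2 + w.im ^ 2) ≤ Real.sin |x| ^ 2 + Real.sinh |w.im| ^ 2 := by
      have : (2 / π) ^ 2 ≤ 1 := by
        rw [div_pow, div_le_one (by positivity)]; nlinarith [Real.pi_gt_three]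
      nlinarith [sq_abs x, sq_abs w.im, abs_nonneg x, abs_nonneg w.im, sq_nonneg w.im,
        mul_le_mul hjordan hjordan (by positivity) (hjordan.trans' (by positivity))]
    have h2 : (2 / π) ^ 2 * (π / 2) ^ 2 = 1 := by field_simp
    nlinarith [mul_le_mul_of_nonneg_left hdist (sq_nonneg (2 / π))]
  nlinarith [norm_nonneg (sin w)]

theorem Complex.exp_abs_im_le_three_mul_norm_sin {w : ℂ}
    (hw : ∀ k : ℤ, π / 2 ≤ ‖w - k * π‖) : Real.exp |w.im| ≤ 3 * ‖sin w‖ := by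
  rcases le_or_gt |w.im| 1 with hsmall | hlarge
  · have he : Real.exp |w.im| ≤ 3 :=
      (Real.exp_le_exp.mpr hsmall).trans (Real.exp_one_lt_d9.le.trans (by norm_num))
    linarith [one_le_norm_sin hw]
  · have hsinh : Real.sinh |w.im| ≤ ‖sin w‖ := by
      have h := norm_sin_sq_s16 w
      rw [← sq_abs (Real.sinh w.im), Real.abs_sinh] at h
      nlinarith [norm_nonneg (sin w), Real.sinh_nonneg_iff.mpr (abs_nonneg w.im)]
    have hexp2 : 3 ≤ Real.exp |w.im| * Real.exp |w.im| := by
      rw [← Real.exp_add]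
      linarith [Real.add_one_le_exp (|w.im| + |w.im|)]
    have hinv : Real.exp (-|w.im|) * Real.exp |w.im| = 1 := by
      rw [← Real.exp_add, neg_add_cancel, Real.exp_zero]
    rw [Real.sinh_eq] at hsinh
    nlinarith [Real.exp_pos |w.im|, Real.exp_pos (-|w.im|)]

-- Near a common zero `z₀`, `g / s` is the holomorphic quotient `dslope g z₀ / dslope s z₀`.
theorem differentiable_div_of_simple_zeros {g s : ℂ → ℂ} (hg : Differentiable ℂ g)
    (hs : Differentiable ℂ s) (hzero : ∀ z, s z = 0 → g z = 0)
    (hsimple : ∀ z, s z = 0 → deriv s z ≠ 0) :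
    Differentiable ℂ (fun z => if s z = 0 then deriv g z / deriv s z else g z / s z) := by
  intro z₀
  by_cases h₀ : s z₀ = 0
  · have hdslope : ∀ {φ : ℂ → ℂ}, Differentiable ℂ φ → DifferentiableAt ℂ (dslope φ z₀) z₀ :=
      fun hφ => ((differentiableOn_dslope Filter.univ_mem).mpr hφ.differentiableOn).differentiableAt
        Filter.univ_mem
    have hne : dslope s z₀ z₀ ≠ 0 := by rw [dslope_same]; exact hsimple z₀ h₀
    refine ((hdslope hg).div (hdslope hs) hne).congr_of_eventuallyEq ?_
    filter_upwards [(hdslope hs).continuousAt.eventually_ne hne] with z hz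
    rcases eq_or_ne z z₀ with rfl | hzz
    · simp only [h₀, if_true, Pi.div_apply, dslope_same]
    · have hsz : s z ≠ 0 := by
        rw [dslope_of_ne _ hzz, slope_def_field, h₀, sub_zero] at hz
        exact (div_ne_zero_iff.mp hz).1
      simp only [hsz, if_false, Pi.div_apply, dslope_of_ne _ hzz, slope_def_field, h₀,
        hzero z₀ h₀, sub_zero]
      field_simp [sub_ne_zero.mpr hzz]
  · refine ((hg z₀).div (hs z₀) h₀).congr_of_eventuallyEq ?_
    filter_upwards [hs.continuous.continuousAt.eventually_ne h₀] with z hz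
    simp only [hz, if_false, Pi.div_apply]

theorem Complex.half_pi_le_norm_sub_int_mul_pi {w : ℂ} {k : ℤ} (hw : ‖w - k * π‖ ≤ π / 2)
    {j : ℤ} (hjk : j ≠ k) : π / 2 ≤ ‖w - j * π‖ := by
  have hkj : π ≤ ‖(k * π - j * π : ℂ)‖ := by
    have h1 : (1 : ℝ) ≤ |((k - j : ℤ) : ℝ)| := by
      rw [← Int.cast_abs]; exact_mod_cast Int.one_le_abs (sub_ne_zero.mpr hjk.symm)
    have h2 : (k * π - j * π : ℂ) = (((k - j : ℤ) : ℝ) * π : ℝ) := by push_cast; ring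
    rw [h2, norm_real, Real.norm_eq_abs, abs_mul, abs_of_pos Real.pi_pos]
    nlinarith [Real.pi_pos]
  have htri := norm_sub_le_norm_sub_add_norm_sub (k * π : ℂ) w (j * π)
  rw [norm_sub_rev _ w] at htri
  linarith

-- Maximum principle on the discs of radius `π / 2` about `πℤ`, whose boundaries lie far from `πℤ`.
theorem Complex.norm_le_of_forall_half_pi_le_norm_sub {H : ℂ → ℂ} (hH : Differentiable ℂ H)
    {M : ℝ} (hM : ∀ w : ℂ, (∀ k : ℤ, π / 2 ≤ ‖w - k * π‖) → ‖H w‖ ≤ M) (z : ℂ) : ‖H z‖ ≤ M := by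
  by_cases hfar : ∀ k : ℤ, π / 2 ≤ ‖z - k * π‖
  · exact hM z hfar
  push Not at hfar
  obtain ⟨k, hk⟩ := hfar
  have hρ : (π / 2 : ℝ) ≠ 0 := by positivity
  refine norm_le_of_forall_mem_frontier_norm_le Metric.isBounded_ball hH.diffContOnCl
    (fun w hw => hM w fun j => ?_) (subset_closure (mem_ball_iff_norm.mpr hk))
  rw [frontier_ball _ hρ, mem_sphere_iff_norm] at hw
  rcases eq_or_ne j k with rfl | hjk
  · exact hw.ge
  · exact half_pi_le_norm_sub_int_mul_pi hw.le hjk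

theorem Complex.exists_eq_mul_sin_of_norm_le {g : ℂ → ℂ} (hg : Differentiable ℂ g) {C : ℝ}
    (hbound : ∀ w, ‖g w‖ ≤ C * Real.exp |w.im|) (hzero : ∀ k : ℤ, g (k * π) = 0) :
    ∃ a : ℂ, ∀ w, g w = a * sin w := by
  have hzero' : ∀ w, sin w = 0 → g w = 0 := by
    intro w hw
    obtain ⟨k, rfl⟩ := sin_eq_zero_iff.mp hw
    exact hzero k
  have hsimple : ∀ w, sin w = 0 → deriv sin w ≠ 0 := by
    intro w hw hcos
    have := sin_sq_add_cos_sq w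
    rw [hw, ← Complex.deriv_sin, hcos] at this
    norm_num at this
  set H : ℂ → ℂ := fun w => if sin w = 0 then deriv g w / deriv sin w else g w / sin w
  have hH : Differentiable ℂ H :=
    differentiable_div_of_simple_zeros hg differentiable_sin hzero' hsimple
  have hHbound : ∀ w, ‖H w‖ ≤ 3 * C := by
    refine norm_le_of_forall_half_pi_le_norm_sub hH fun w hw => ?_
    have hexp := exp_abs_im_le_three_mul_norm_sin hw
    have hsin : 0 < ‖sin w‖ := by nlinarith [Real.exp_pos |w.im|]
    simp only [H, norm_ne_zero_iff.mp hsin.ne', if_false, norm_div]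
    have hC : 0 ≤ C :=
      nonneg_of_mul_nonneg_left ((norm_nonneg _).trans (hbound w)) (Real.exp_pos _)
    rw [div_le_iff₀ hsin]
    nlinarith [hbound w]
  refine ⟨H 0, fun w => ?_⟩
  have hconst : H w = H 0 := hH.apply_eq_apply_of_bounded
    (isBounded_iff_forall_norm_le.mpr ⟨3 * C, by rintro _ ⟨z, rfl⟩; exact hHbound z⟩) w 0
  by_cases hw : sin w = 0
  · rw [hzero' w hw, hw, mul_zero]
  · rw [← hconst]
    simp only [H, hw, if_false]
    field_simp

theorem Complex.ofReal_exp_re_mul_exp_I_mul_im (w : ℂ) :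
    (Real.exp w.re : ℂ) * exp (I * w.im) = exp w := by
  rw [ofReal_exp, ← exp_add, mul_comm I, re_add_im]

-- The polar difference quotient of `f` is that of `F` with respect to `exp z`; multiplying by
-- the slope of `exp` gives the complex difference quotient.
theorem PolarAnalyticOn.differentiable_comp_exp {f : ℝ × ℝ → ℂ}
    (hf : PolarAnalyticOn f polarHalfPlane) :
    Differentiable ℂ (fun z : ℂ => f (Real.exp z.re, z.im)) := by
  intro z
  set F : ℂ → ℂ := fun w => f (Real.exp w.re, w.im)
  set ψ : ℂ → ℝ × ℝ := fun w => (Real.exp w.re, w.im)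
  obtain ⟨L, hL⟩ := hf (ψ z) (Real.exp_pos z.re)
  have hψ : Tendsto ψ (𝓝[≠] z) (𝓝[polarHalfPlane \ {ψ z}] ψ z) := by
    refine tendsto_nhdsWithin_iff.mpr ⟨?_, ?_⟩
    · exact ((Real.continuous_exp.comp continuous_re).prodMk continuous_im).continuousAt.tendsto
        |>.mono_left nhdsWithin_le_nhds
    · filter_upwards [self_mem_nhdsWithin] with w hw
      refine ⟨Real.exp_pos w.re, fun hψw => hw ?_⟩
      obtain ⟨hre, him⟩ := Prod.mk.inj hψw
      exact Complex.ext (Real.exp_injective hre) him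
  have hpolar : Tendsto (fun w => (F w - F z) / (exp w - exp z)) (𝓝[≠] z) (𝓝 L) := by
    refine (hL.comp hψ).congr fun w => ?_
    simp only [Function.comp_apply, ψ, F, ofReal_exp_re_mul_exp_I_mul_im]
  have hexp : Tendsto (slope exp z) (𝓝[≠] z) (𝓝 (exp z)) :=
    hasDerivAt_iff_tendsto_slope.mp (hasDerivAt_exp z)
  refine (hasDerivAt_iff_tendsto_slope.mpr ((hpolar.mul hexp).congr' ?_)).differentiableAt
  filter_upwards [(hasDerivAt_exp z).eventually_ne (exp_ne_zero z) (c := exp z),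
    self_mem_nhdsWithin] with w hexpw hw
  rw [slope_def_field, slope_def_field]
  field_simp [sub_ne_zero.mpr hexpw, sub_ne_zero.mpr hw]

theorem PolarAnalyticOn.exists_eq_mul_sin {f : ℝ × ℝ → ℂ} {c T C : ℝ}
    (hf : PolarAnalyticOn f polarHalfPlane) (hT : 0 < T)
    (hbound : ∀ r θ : ℝ, 0 < r → r ^ c * ‖f (r, θ)‖ ≤ C * Real.exp (T * |θ|))
    (hzero : ∀ k : ℤ, f (Real.exp ((k : ℝ) * π / T), 0) = 0) :
    ∃ a : ℂ, ∀ z : ℂ, exp (c * z) * f (Real.exp z.re, z.im) = a * sin (T * z) := by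
  set G : ℂ → ℂ := fun z => exp (c * z) * f (Real.exp z.re, z.im)
  have hT' : (T : ℂ) ≠ 0 := ofReal_ne_zero.mpr hT.ne'
  have hG : Differentiable ℂ G :=
    ((differentiable_id.const_mul _).cexp).mul hf.differentiable_comp_exp
  have hGbound : ∀ z, ‖G z‖ ≤ C * Real.exp (T * |z.im|) := fun z => by
    have hnorm : ‖exp (c * z)‖ = Real.exp z.re ^ c := by
      rw [norm_exp, Real.rpow_def_of_pos (Real.exp_pos _), Real.log_exp, re_ofReal_mul, mul_comm]
    simpa only [G, norm_mul, hnorm] using hbound _ z.im (Real.exp_pos _)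
  obtain ⟨a, ha⟩ := exists_eq_mul_sin_of_norm_le (g := fun w => G (w / T))
    (hG.comp (differentiable_id.div_const _)) (C := C)
    (fun w => by simpa [abs_div, abs_of_pos hT, mul_div_cancel₀ _ hT.ne'] using hGbound (w / T))
    (fun k => by
      simpa [G, ← ofReal_intCast, ← Complex.ofReal_mul, ← Complex.ofReal_div] using hzero k)
  exact ⟨a, fun z => by simpa [mul_div_cancel_left₀ _ hT'] using ha (T * z)⟩

theorem lintegral_Ioi_ofReal_div_eq_lintegral_comp_exp (φ : ℝ → ℝ) :
    ∫⁻ r in Set.Ioi 0, ENNReal.ofReal (φ r / r) = ∫⁻ t, ENNReal.ofReal (φ (Real.exp t)) := by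
  rw [← Real.range_exp, ← Set.image_univ, lintegral_image_eq_lintegral_abs_deriv_mul
    MeasurableSet.univ (fun t _ => (Real.hasDerivAt_exp t).hasDerivWithinAt)
    Real.exp_injective.injOn, Measure.restrict_univ]
  refine lintegral_congr fun t => ?_
  rw [← ENNReal.ofReal_mul (abs_nonneg _), abs_of_pos (Real.exp_pos t),
    mul_div_cancel₀ _ (Real.exp_pos t).ne']

theorem Function.Periodic.lintegral_ofReal_eq_top {ψ : ℝ → ℝ} {P : ℝ}
    (hψ : Function.Periodic ψ P) (hP : 0 < P) (hcont : Continuous ψ) (hnonneg : ∀ t, 0 ≤ ψ t)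
    (hpos : 0 < ∫ t in 0..P, ψ t) : ∫⁻ t, ENNReal.ofReal (ψ t) = ⊤ := by
  have hle : ∀ t, 0 ≤ t → ENNReal.ofReal (∫ s in 0..t, ψ s) ≤ ∫⁻ s, ENNReal.ofReal (ψ s) := by
    intro t ht
    rw [intervalIntegral.integral_of_le ht, ofReal_integral_eq_lintegral_ofReal
      (hcont.integrableOn_Icc.mono_set Set.Ioc_subset_Icc_self) (ae_of_all _ hnonneg)]
    exact setLIntegral_le_lintegral _ _
  refine top_le_iff.mp (le_of_tendsto
    (ENNReal.tendsto_ofReal_atTop.comp (hψ.tendsto_atTop_intervalIntegral_of_pos hpos hP)) ?_)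
  filter_upwards [eventually_ge_atTop 0] with t ht using hle t ht

theorem XNorm_eq_top_of_eq_mul_abs_sin {c T a : ℝ} {p : ℝ≥0∞} {φ : ℝ → ℂ} (hp : p ≠ 0)
    (hp' : p ≠ ⊤) (hT : 0 < T) (ha : 0 < a)
    (hφ : ∀ r, 0 < r → r ^ c * ‖φ r‖ = a * |Real.sin (T * Real.log r)|) :
    XNorm c p φ = ⊤ := by
  have hq : 0 < p.toReal := ENNReal.toReal_pos hp hp'
  set ψ : ℝ → ℝ := fun t => (a * |Real.sin (T * t)|) ^ p.toReal
  have hψ : Function.Periodic ψ (π / T) := fun t => by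
    simp only [ψ, mul_add, mul_div_cancel₀ _ hT.ne', Real.sin_add_pi, abs_neg]
  have hcont : Continuous ψ :=
    (continuous_const.mul (Real.continuous_sin.comp (continuous_const_mul T)).abs).rpow_const
      fun _ => Or.inr hq.le
  have hpos : 0 < ∫ t in 0..π / T, ψ t := by
    refine intervalIntegral.intervalIntegral_pos_of_pos_on (hcont.intervalIntegrable _ _)
      (fun t ht => ?_) (by positivity)
    have hsin : 0 < Real.sin (T * t) := Real.sin_pos_of_pos_of_lt_pi (by nlinarith [ht.1])
      (by have := ht.2; rwa [lt_div_iff₀ hT, mul_comm] at this)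
    positivity
  rw [XNorm, if_neg hp', lintegral_Ioi_ofReal_div_eq_lintegral_comp_exp
    (fun r => (r ^ c * ‖φ r‖) ^ p.toReal)]
  simp only [hφ _ (Real.exp_pos _), Real.log_exp]
  rw [hψ.lintegral_ofReal_eq_top (by positivity) hcont (fun t => by positivity) hpos,
    ENNReal.top_rpow_of_pos (by positivity)]

/-- uniqueness from samples in `B^p_{c,T}` with `p < ∞`. -/
theorem statement16 (p : ℝ≥0∞) (hp : 1 ≤ p) (hp' : p ≠ ⊤) (c T : ℝ) (hT : 0 < T)
    (f : ℝ × ℝ → ℂ) (hf : MemMellinBernstein p c T f)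
    (hzero : ∀ k : ℤ, f (Real.exp ((k : ℝ) * Real.pi / T), 0) = 0) :
    ∀ r θ : ℝ, 0 < r → f (r, θ) = 0 := by
  obtain ⟨hpa, hX, C, -, hbound⟩ := hf
  obtain ⟨a, ha⟩ := hpa.exists_eq_mul_sin hT hbound hzero
  have hreal : ∀ r, 0 < r → r ^ c * ‖f (r, 0)‖ = ‖a‖ * |Real.sin (T * Real.log r)| := by
    intro r hr
    have h := congrArg norm (ha (Real.log r))
    rwa [norm_mul, norm_mul, ← Complex.ofReal_mul, norm_exp_ofReal, ← Complex.ofReal_mul,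
      ← ofReal_sin, norm_real, Real.norm_eq_abs, ofReal_re, ofReal_im, Real.exp_log hr, mul_comm c,
      ← Real.rpow_def_of_pos hr] at h
  have ha0 : a = 0 := by
    by_contra hne
    exact hX.ne (XNorm_eq_top_of_eq_mul_abs_sin (zero_lt_one.trans_le hp).ne' hp' hT
      (norm_pos_iff.mpr hne) hreal)
  intro r θ hr
  simpa [ha0, exp_ne_zero, Real.exp_log hr] using ha (Real.log r + θ * I)

end
end
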